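/- arXiv:2507.09794 — 2 statements merged into one kernel-verified Lean document; each statement's English description precedes it below -/
import Mathlib

section
/- In the single-interval nondeferrable demand problem, the optimal net consumption z*(g) = d*(g) − g is nonincreasing in g, positive for g < d⁺, zero for g ∈ [d⁺, d⁻], and negative for g > d⁻, where d⁺ = min(d̄,(U')⁻¹(π⁺)) and d⁻ = min(d̄,(U')⁻¹(π⁻)). -/
noncomputable def nemP (pb ps : ℝ) (z : ℝ) : ℝ := pb * max z 0 - ps * max (-z) 0

def IsExtInv (U : ℝ → ℝ) (dbar : ℝ) (π q : ℝ) : Prop :=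
  q ∈ Set.Icc 0 dbar ∧
    (deriv U q = π ∨ (q = 0 ∧ deriv U 0 < π) ∨ (q = dbar ∧ π < deriv U dbar))

/-- Gradient inequality for a strictly concave (via strictly antitone derivative)
differentiable function: `U y - U x < deriv U x * (y - x)` for `x ≠ y`. -/
lemma grad_ineq (U : ℝ → ℝ) (dbar : ℝ)
    (hdiff : ∀ d ∈ Set.Icc 0 dbar, DifferentiableAt ℝ U d)
    (hanti : StrictAntiOn (deriv U) (Set.Icc 0 dbar))
    {x y : ℝ} (hx : x ∈ Set.Icc 0 dbar) (hy : y ∈ Set.Icc 0 dbar) (hne : x ≠ y) :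
    U y - U x < deriv U x * (y - x) := by
  have hsub : ∀ a b : ℝ, a ∈ Set.Icc 0 dbar → b ∈ Set.Icc 0 dbar →
      Set.Icc a b ⊆ Set.Icc 0 dbar := by
    intro a b ha hb z hz
    exact ⟨le_trans ha.1 hz.1, le_trans hz.2 hb.2⟩
  rcases lt_or_gt_of_ne hne with h | h
  · -- x < y
    have hcont : ContinuousOn U (Set.Icc x y) := fun z hz =>
      (hdiff z (hsub x y hx hy hz)).continuousAt.continuousWithinAt
    have hdo : DifferentiableOn ℝ U (Set.Ioo x y) := fun z hz =>
      (hdiff z (hsub x y hx hy (Set.mem_Icc_of_Ioo hz))).differentiableWithinAt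
    obtain ⟨c, hc, hceq⟩ := exists_deriv_eq_slope U h hcont hdo
    have hcmem : c ∈ Set.Icc 0 dbar := hsub x y hx hy (Set.mem_Icc_of_Ioo hc)
    have hlt : deriv U c < deriv U x := hanti hx hcmem hc.1
    have : U y - U x = deriv U c * (y - x) :=
      (div_eq_iff (by linarith : y - x ≠ 0)).1 hceq.symm
    rw [this]
    exact mul_lt_mul_of_pos_right hlt (by linarith)
  · -- y < x
    have hcont : ContinuousOn U (Set.Icc y x) := fun z hz =>
      (hdiff z (hsub y x hy hx hz)).continuousAt.continuousWithinAt
    have hdo : DifferentiableOn ℝ U (Set.Ioo y x) := fun z hz =>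
      (hdiff z (hsub y x hy hx (Set.mem_Icc_of_Ioo hz))).differentiableWithinAt
    obtain ⟨c, hc, hceq⟩ := exists_deriv_eq_slope U h hcont hdo
    have hcmem : c ∈ Set.Icc 0 dbar := hsub y x hy hx (Set.mem_Icc_of_Ioo hc)
    have hlt : deriv U x < deriv U c := hanti hcmem hx hc.2
    have : U x - U y = deriv U c * (x - y) :=
      (div_eq_iff (by linarith : x - y ≠ 0)).1 hceq.symm
    nlinarith [this]

/-- Four point strict concavity inequality: for `x1 < x2` and `δ > 0`,
`U x1 + U (x2 + δ) < U (x1 + δ) + U x2`. -/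
lemma four_pt (U : ℝ → ℝ) (dbar : ℝ) (hU : StrictConcaveOn ℝ (Set.Icc 0 dbar) U)
    {x1 x2 δ : ℝ} (h12 : x1 < x2) (hδ : 0 < δ)
    (h1 : x1 ∈ Set.Icc 0 dbar) (h2 : x2 + δ ∈ Set.Icc 0 dbar) :
    U x1 + U (x2 + δ) < U (x1 + δ) + U x2 := by
  set s : ℝ := x2 + δ - x1 with hs
  have hspos : 0 < s := by simp only [hs]; linarith
  set t : ℝ := δ / s with ht
  have ht0 : 0 < t := div_pos hδ hspos
  have ht1 : t < 1 := (div_lt_one hspos).2 (by linarith)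
  have hne : x1 ≠ x2 + δ := by linarith
  have hsum : (1 - t) + t = 1 := by ring
  have hsum' : t + (1 - t) = 1 := by ring
  have hA := hU.2 h1 h2 hne (by linarith : (0:ℝ) < 1 - t) ht0 hsum
  have hB := hU.2 h1 h2 hne ht0 (by linarith : (0:ℝ) < 1 - t) hsum'
  have hcomb1 : (1 - t) • x1 + t • (x2 + δ) = x1 + δ := by
    have hsne : s ≠ 0 := ne_of_gt hspos
    simp only [smul_eq_mul, ht]
    field_simp
    ring
  have hcomb2 : t • x1 + (1 - t) • (x2 + δ) = x2 := by
    have hsne : s ≠ 0 := ne_of_gt hspos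
    simp only [smul_eq_mul, ht]
    field_simp
    ring
  rw [hcomb1] at hA
  rw [hcomb2] at hB
  simp only [smul_eq_mul] at hA hB
  nlinarith [hA, hB]

/-- the optimal net consumption `z*(g) = d*(g) − g` is nonincreasing in `g`,
positive for `g < d⁺`, zero for `g ∈ [d⁺, d⁻]`, and negative for `g > d⁻`. -/
theorem optimal_net_consumption_zones
    (U : ℝ → ℝ) (dbar : ℝ) (hdbar : 0 < dbar)
    (hU : StrictConcaveOn ℝ (Set.Icc 0 dbar) U)
    (hdiff : ∀ d ∈ Set.Icc 0 dbar, DifferentiableAt ℝ U d)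
    (hanti : StrictAntiOn (deriv U) (Set.Icc 0 dbar))
    (pb ps : ℝ) (hps : 0 ≤ ps) (hp : ps < pb)
    (qp qm : ℝ) (hqp : IsExtInv U dbar pb qp) (hqm : IsExtInv U dbar ps qm)
    (dstar : ℝ → ℝ)
    (hopt : ∀ g, 0 ≤ g → dstar g ∈ Set.Icc 0 dbar ∧
      IsMaxOn (fun d => U d - nemP pb ps (d - g)) (Set.Icc 0 dbar) (dstar g)) :
    (∀ g₁ g₂, 0 ≤ g₁ → g₁ ≤ g₂ → dstar g₂ - g₂ ≤ dstar g₁ - g₁) ∧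
    (∀ g, 0 ≤ g → g < min dbar qp → 0 < dstar g - g) ∧
    (∀ g, min dbar qp ≤ g → g ≤ min dbar qm → dstar g - g = 0) ∧
    (∀ g, min dbar qm < g → dstar g - g < 0) := by
  have hqpmem := hqp.1
  have hqmmem := hqm.1
  have hminp : min dbar qp = qp := min_eq_right hqpmem.2
  have hminm : min dbar qm = qm := min_eq_right hqmmem.2
  -- antitone (≤) version of hanti
  have hle : ∀ x ∈ Set.Icc 0 dbar, ∀ y ∈ Set.Icc 0 dbar, x ≤ y →
      deriv U y ≤ deriv U x := by
    intro x hx y hy h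
    rcases h.lt_or_eq with h' | h'
    · exact (hanti hx hy h').le
    · rw [h']
  -- nemP values
  have hnem_pos : ∀ z : ℝ, 0 ≤ z → nemP pb ps z = pb * z := by
    intro z hz
    simp [nemP, max_eq_left hz, max_eq_right (by linarith : -z ≤ 0)]
  have hnem_neg : ∀ z : ℝ, z ≤ 0 → nemP pb ps z = ps * z := by
    intro z hz
    have : max z 0 = 0 := max_eq_right hz
    have h2 : max (-z) 0 = -z := max_eq_left (by linarith)
    show pb * max z 0 - ps * max (-z) 0 = ps * z
    rw [this, h2]
    ring
  refine ⟨?_, ?_, ?_, ?_⟩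
  · -- monotonicity
    intro g₁ g₂ hg1 hg12
    by_contra hcon
    push_neg at hcon
    rcases eq_or_lt_of_le hg12 with rfl | hlt
    · exact lt_irrefl _ hcon
    · have hg2 : 0 ≤ g₂ := le_trans hg1 hg12
      obtain ⟨hd1mem, hd1max⟩ := hopt g₁ hg1
      obtain ⟨hd2mem, hd2max⟩ := hopt g₂ hg2
      set d1 := dstar g₁
      set d2 := dstar g₂
      have hz : d1 - g₁ < d2 - g₂ := hcon
      -- candidate points
      set e1 : ℝ := d2 - g₂ + g₁ with he1
      set e2 : ℝ := d1 + (g₂ - g₁) with he2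
      have he1mem : e1 ∈ Set.Icc 0 dbar := by
        constructor
        · have : d1 < e1 := by simp only [he1]; linarith
          linarith [hd1mem.1]
        · have : e1 ≤ d2 := by simp only [he1]; linarith
          linarith [hd2mem.2]
      have he2mem : e2 ∈ Set.Icc 0 dbar := by
        constructor
        · have : d1 ≤ e2 := by simp only [he2]; linarith
          linarith [hd1mem.1]
        · have : e2 < d2 := by simp only [he2]; linarith
          linarith [hd2mem.2]
      have h1 := hd1max he1mem
      have h2 := hd2max he2mem
      simp only [Set.mem_setOf_eq] at h1 h2
      have harg1 : e1 - g₁ = d2 - g₂ := by simp only [he1]; ring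
      have harg2 : e2 - g₂ = d1 - g₁ := by simp only [he2]; ring
      rw [harg1] at h1
      rw [harg2] at h2
      -- sum: U e1 + U e2 ≤ U d1 + U d2
      have hsum : U e1 + U e2 ≤ U d1 + U d2 := by linarith
      -- four point inequality with x1 = d1, x2 = e2, δ = (d2-g₂)-(d1-g₁)
      have h4 := four_pt U dbar hU (show d1 < e2 by simp only [he2]; linarith)
        (show (0:ℝ) < (d2 - g₂) - (d1 - g₁) by linarith) hd1mem
        (by
          have : e2 + ((d2 - g₂) - (d1 - g₁)) = d2 := by simp only [he2]; ring
          rw [this]; exact hd2mem)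
      have hx1 : d1 + ((d2 - g₂) - (d1 - g₁)) = e1 := by simp only [he1]; ring
      have hx2 : e2 + ((d2 - g₂) - (d1 - g₁)) = d2 := by simp only [he2]; ring
      rw [hx1, hx2] at h4
      linarith
  · -- positive zone: g < qp
    intro g hg0 hglt
    rw [hminp] at hglt
    by_contra hcon
    push_neg at hcon
    have hgmem : g ∈ Set.Icc 0 dbar := ⟨hg0, le_trans hglt.le hqpmem.2⟩
    obtain ⟨hdmem, hdmax⟩ := hopt g hg0
    set d := dstar g
    have hdle : d ≤ g := by linarith
    -- deriv U g > ps
    have hdg : ps < deriv U g := by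
      rcases hqp.2 with h | ⟨hq0, _⟩ | ⟨hqd, hd⟩
      · have := hanti hgmem hqpmem hglt
        rw [h] at this
        linarith
      · rw [hq0] at hglt; linarith
      · have := hle g hgmem dbar (Set.right_mem_Icc.2 hdbar.le) hgmem.2
        linarith
    -- deriv U qp ≥ pb
    have hdqp : pb ≤ deriv U qp := by
      rcases hqp.2 with h | ⟨hq0, _⟩ | ⟨hqd, hd⟩
      · rw [h]
      · rw [hq0] at hglt; linarith
      · rw [hqd]; exact hd.le
    -- f qp > f g
    have hfqp : U g - nemP pb ps (g - g) < U qp - nemP pb ps (qp - g) := by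
      have hgr := grad_ineq U dbar hdiff hanti hqpmem hgmem (ne_of_gt hglt)
      rw [hnem_pos (qp - g) (by linarith), hnem_pos (g - g) (by linarith)]
      nlinarith
    -- f g ≥ f d
    have hfgd : U d - nemP pb ps (d - g) ≤ U g - nemP pb ps (g - g) := by
      rcases eq_or_lt_of_le hdle with h | hdlt
      · rw [h]
      · have hgr := grad_ineq U dbar hdiff hanti hgmem hdmem (hdlt.ne')
        rw [hnem_neg (d - g) (by linarith), hnem_pos (g - g) (by linarith)]
        nlinarith
    have := hdmax hqpmem
    simp only [Set.mem_setOf_eq] at this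
    linarith
  · -- zero zone
    intro g hg1 hg2
    rw [hminp] at hg1
    rw [hminm] at hg2
    have hg0 : 0 ≤ g := le_trans hqpmem.1 hg1
    have hgmem : g ∈ Set.Icc 0 dbar := ⟨hg0, le_trans hg2 hqmmem.2⟩
    obtain ⟨hdmem, hdmax⟩ := hopt g hg0
    set d := dstar g
    by_contra hcon
    have hne : d ≠ g := fun h => hcon (by rw [h]; ring)
    -- show f d < f g, contradicting maximality
    have hgr := grad_ineq U dbar hdiff hanti hgmem hdmem (Ne.symm hne)
    have hkey : U d - nemP pb ps (d - g) < U g - nemP pb ps (g - g) := by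
      rcases lt_or_gt_of_ne hne with hdlt | hdgt
      · -- d < g : need deriv U g ≥ ps
        have hdg : ps ≤ deriv U g := by
          rcases hqm.2 with h | ⟨hq0, _⟩ | ⟨hqd, hd⟩
          · have := hle g hgmem qm hqmmem hg2
            rw [h] at this; linarith
          · rw [hq0] at hg2
            have : g = 0 := le_antisymm hg2 hg0
            rw [this] at hdlt
            linarith [hdmem.1]
          · have := hle g hgmem dbar (Set.right_mem_Icc.2 hdbar.le) hgmem.2
            linarith
        rw [hnem_neg (d - g) (by linarith), hnem_pos (g - g) (by linarith)]
        nlinarith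
      · -- d > g : need deriv U g ≤ pb
        have hgd : g < dbar := lt_of_lt_of_le hdgt hdmem.2
        have hdg : deriv U g ≤ pb := by
          rcases hqp.2 with h | ⟨hq0, hq0'⟩ | ⟨hqd, _⟩
          · have := hle qp hqpmem g hgmem hg1
            rw [h] at this; linarith
          · have := hle (0:ℝ) (Set.left_mem_Icc.2 hdbar.le) g hgmem hg0
            linarith
          · rw [hqd] at hg1; linarith
        rw [hnem_pos (d - g) (by linarith), hnem_pos (g - g) (by linarith)]
        nlinarith
    have := hdmax hgmem
    simp only [Set.mem_setOf_eq] at this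
    linarith
  · -- negative zone: g > qm
    intro g hgt
    rw [hminm] at hgt
    have hg0 : 0 ≤ g := le_trans hqmmem.1 hgt.le
    obtain ⟨hdmem, hdmax⟩ := hopt g hg0
    set d := dstar g
    rcases lt_or_ge dbar g with hcase | hcase
    · linarith [hdmem.2]
    · have hgmem : g ∈ Set.Icc 0 dbar := ⟨hg0, hcase⟩
      by_contra hcon
      push_neg at hcon
      have hged : g ≤ d := by linarith
      -- deriv U qm ≤ ps
      have hdqm : deriv U qm ≤ ps := by
        rcases hqm.2 with h | ⟨hq0, hq0'⟩ | ⟨hqd, _⟩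
        · rw [h]
        · rw [hq0]; exact hq0'.le
        · rw [hqd] at hgt; linarith
      -- deriv U g < pb
      have hdg : deriv U g < pb := by
        rcases hqm.2 with h | ⟨hq0, hq0'⟩ | ⟨hqd, _⟩
        · have := hanti hqmmem hgmem hgt
          rw [h] at this; linarith
        · have := hle (0:ℝ) (Set.left_mem_Icc.2 hdbar.le) g hgmem hg0
          linarith
        · rw [hqd] at hgt; linarith
      -- f qm > f g
      have hfqm : U g - nemP pb ps (g - g) < U qm - nemP pb ps (qm - g) := by
        have hgr := grad_ineq U dbar hdiff hanti hqmmem hgmem (ne_of_lt hgt)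
        rw [hnem_neg (qm - g) (by linarith), hnem_pos (g - g) (by linarith)]
        nlinarith
      -- f g ≥ f d
      have hfgd : U d - nemP pb ps (d - g) ≤ U g - nemP pb ps (g - g) := by
        rcases eq_or_lt_of_le hged with h | hdgt
        · rw [← h]
        · have hgr := grad_ineq U dbar hdiff hanti hgmem hdmem hdgt.ne
          rw [hnem_pos (d - g) (by linarith), hnem_pos (g - g) (by linarith)]
          nlinarith
      have := hdmax hqmmem
      simp only [Set.mem_setOf_eq] at this
      linarith
end

section
/- If d⁻ = Σ_i min(d̄_i,(U_i')⁻¹(π⁻)) < g, then the optimal solution of max Σ U_i(d_i) − P(Σ d_i − g) is d_i* = min(d̄_i,(U_i')⁻¹(π⁻)) for each i, and the household is a net producer (Σ d_i* − g < 0). -/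
lemma nemP_ge (pb ps : ℝ) (hps : 0 ≤ ps) (hp : ps ≤ pb) (z : ℝ) :
    ps * z ≤ nemP pb ps z := by
  have h1 : ps * max z 0 ≤ pb * max z 0 :=
    mul_le_mul_of_nonneg_right hp (le_max_right _ _)
  have h2 : max z 0 - max (-z) 0 = z := by
    rcases le_total z 0 with h | h
    · simp [max_eq_right h, max_eq_left (neg_nonneg.mpr h)]
    · simp [max_eq_left h, max_eq_right (neg_nonpos.mpr h)]
  have h3 : ps * z = ps * max z 0 - ps * max (-z) 0 := by
    rw [← mul_sub, h2]
  rw [h3, nemP]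
  linarith

lemma nemP_of_nonpos (pb ps : ℝ) (z : ℝ) (hz : z ≤ 0) : nemP pb ps z = ps * z := by
  rw [nemP, max_eq_right hz, max_eq_left (neg_nonneg.mpr hz)]
  ring

/-- key pointwise maximization lemma -/
lemma key_max (U : ℝ → ℝ) (dbar : ℝ)
    (hdiff : ∀ d ∈ Set.Icc 0 dbar, DifferentiableAt ℝ U d)
    (ps q : ℝ) (hq : q ∈ Set.Icc (0:ℝ) dbar)
    (h1 : ∀ c ∈ Set.Icc (0:ℝ) dbar, c < q → ps < deriv U c)
    (h2 : ∀ c ∈ Set.Icc (0:ℝ) dbar, q < c → deriv U c < ps)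
    (x : ℝ) (hx : x ∈ Set.Icc (0:ℝ) dbar) :
    U x - ps * x ≤ U q - ps * q := by
  have hcont : ContinuousOn U (Set.Icc 0 dbar) := fun y hy =>
    (hdiff y hy).continuousAt.continuousWithinAt
  rcases lt_trichotomy x q with hlt | heq | hgt
  · have hsub : Set.Icc x q ⊆ Set.Icc 0 dbar := Set.Icc_subset_Icc hx.1 hq.2
    obtain ⟨c, hc, hceq⟩ := exists_deriv_eq_slope U hlt (hcont.mono hsub)
      (fun y hy => (hdiff y (hsub (Set.Ioo_subset_Icc_self hy))).differentiableWithinAt)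
    have hcI : c ∈ Set.Icc (0:ℝ) dbar := hsub (Set.Ioo_subset_Icc_self hc)
    have h3 := h1 c hcI hc.2
    rw [hceq] at h3
    have hqx : 0 < q - x := by linarith
    have h4 : ps * (q - x) < U q - U x := by
      have := (lt_div_iff₀ hqx).mp h3
      linarith
    nlinarith
  · rw [heq]
  · have hsub : Set.Icc q x ⊆ Set.Icc 0 dbar := Set.Icc_subset_Icc hq.1 hx.2
    obtain ⟨c, hc, hceq⟩ := exists_deriv_eq_slope U hgt (hcont.mono hsub)
      (fun y hy => (hdiff y (hsub (Set.Ioo_subset_Icc_self hy))).differentiableWithinAt)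
    have hcI : c ∈ Set.Icc (0:ℝ) dbar := hsub (Set.Ioo_subset_Icc_self hc)
    have h3 := h2 c hcI hc.1
    rw [hceq] at h3
    have hxq : 0 < x - q := by linarith
    have h4 : U x - U q < ps * (x - q) := by
      have := (div_lt_iff₀ hxq).mp h3
      linarith
    nlinarith

/-- if `d⁻ = ∑ min(d̄_i,(U_i')⁻¹(π⁻)) < g`, then
`d_i* = min(d̄_i,(U_i')⁻¹(π⁻))` maximizes `∑ U_i(d_i) − P(∑ d_i − g)` and the household
is a net producer. -/
theorem net_producing_zone
    (K : ℕ) (U : Fin K → ℝ → ℝ) (dbar : Fin K → ℝ) (hdbar : ∀ i, 0 < dbar i)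
    (hU : ∀ i, StrictConcaveOn ℝ (Set.Icc 0 (dbar i)) (U i))
    (hdiff : ∀ i, ∀ d ∈ Set.Icc 0 (dbar i), DifferentiableAt ℝ (U i) d)
    (hanti : ∀ i, StrictAntiOn (deriv (U i)) (Set.Icc 0 (dbar i)))
    (pb ps : ℝ) (hps : 0 ≤ ps) (hp : ps < pb)
    (qm : Fin K → ℝ) (hqm : ∀ i, IsExtInv (U i) (dbar i) ps (qm i))
    (g : ℝ) (hg : ∑ i, min (dbar i) (qm i) < g) :
    IsMaxOn (fun d : Fin K → ℝ => (∑ i, U i (d i)) - nemP pb ps ((∑ i, d i) - g))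
      {d | ∀ i, d i ∈ Set.Icc 0 (dbar i)} (fun i => min (dbar i) (qm i)) ∧
    (∑ i, min (dbar i) (qm i)) - g < 0 := by
  have hmin : ∀ i, min (dbar i) (qm i) = qm i := fun i =>
    min_eq_right (hqm i).1.2
  have hsum_min : (∑ i, min (dbar i) (qm i)) = ∑ i, qm i := by
    simp [hmin]
  have hg' : (∑ i, qm i) < g := by rwa [hsum_min] at hg
  constructor
  · intro d hd
    have hd' : ∀ i, d i ∈ Set.Icc 0 (dbar i) := hd
    -- pointwise maximality
    have hpt : ∀ i, U i (d i) - ps * d i ≤ U i (qm i) - ps * qm i := by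
      intro i
      rcases hqm i with ⟨hqI, hcase⟩
      apply key_max (U i) (dbar i) (hdiff i) ps (qm i) hqI ?_ ?_ (d i) (hd' i)
      · intro c hcI hcq
        rcases hcase with hEq | ⟨h0, hlt⟩ | ⟨hdb, hlt⟩
        · rw [← hEq]; exact hanti i hcI hqI hcq
        · exact absurd hcq (not_lt.mpr (h0 ▸ hcI.1))
        · calc ps < deriv (U i) (dbar i) := hlt
            _ < deriv (U i) c := hanti i hcI ⟨(hdbar i).le, le_refl _⟩ (by rw [← hdb]; exact hcq)
      · intro c hcI hcq
        rcases hcase with hEq | ⟨h0, hlt⟩ | ⟨hdb, hlt⟩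
        · rw [← hEq]; exact hanti i hqI hcI hcq
        · calc deriv (U i) c < deriv (U i) 0 :=
              hanti i ⟨le_refl _, (hdbar i).le⟩ hcI (by rw [← h0]; exact hcq)
            _ < ps := hlt
        · exact absurd hcq (not_lt.mpr (hdb ▸ hcI.2))
    have hsum : (∑ i, U i (d i)) - ps * (∑ i, d i) ≤
        (∑ i, U i (qm i)) - ps * (∑ i, qm i) := by
      have := Finset.sum_le_sum (s := Finset.univ) (fun i _ => hpt i)
      simpa [Finset.sum_sub_distrib, Finset.mul_sum] using this
    have hP : ps * ((∑ i, d i) - g) ≤ nemP pb ps ((∑ i, d i) - g) :=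
      nemP_ge pb ps hps hp.le _
    have hPq : nemP pb ps ((∑ i, qm i) - g) = ps * ((∑ i, qm i) - g) :=
      nemP_of_nonpos pb ps _ (by linarith)
    simp only [Set.mem_setOf_eq, hmin]
    have : (∑ i, U i (d i)) - nemP pb ps ((∑ i, d i) - g) ≤
        (∑ i, U i (qm i)) - nemP pb ps ((∑ i, qm i) - g) := by
      rw [hPq]; ring_nf; nlinarith
    simpa [hmin] using this
  · linarith
end
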